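/- arXiv:2506.06964 — 2 statements merged into one kernel-verified Lean document; each statement's English description precedes it below -/
import Mathlib

section
/- Let X be a finite set, π and π₀ probability mass functions on X with π(x), π₀(x) > 0 for all x, and r̃ : X → ℝ with |r̃(x)| ≤ b for all x. Define C₁ = ∑_x π₀(x) r̃(x) (1 - log π₀(x)) and C₂ = b · max_x ( π(x)/π₀(x) - 1 - log(π(x)/π₀(x)) ). Then |∑_x π(x) r̃(x) - ∑_x π₀(x) r̃(x) log π(x)| ≤ |C₁| + C₂. -/
/-!
With `u = π / π₀`, each term splits as
`π r̃ - π₀ r̃ log π = π₀ r̃ (1 - log π₀) + π₀ r̃ (u - 1 - log u)`.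
Summed, the first part is `C₁`; the second is a `π₀`-average of values `r̃ (u - 1 - log u)`,
each bounded in absolute value by `C₂` because `0 ≤ u - 1 - log u`.
-/

open Finset

lemma Real.sub_one_sub_log_nonneg {u : ℝ} (hu : 0 < u) : 0 ≤ u - 1 - Real.log u := by
  linarith [Real.log_le_sub_one_of_pos hu]

lemma Real.mul_sub_mul_mul_log_eq {p q : ℝ} (hp : 0 < p) (hq : 0 < q) (r : ℝ) :
    p * r - q * r * Real.log p =
      q * r * (1 - Real.log q) + q * r * (p / q - 1 - Real.log (p / q)) := by
  rw [Real.log_div hp.ne' hq.ne']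
  field_simp
  ring

lemma Finset.abs_sum_mul_le_of_sum_eq_one {ι : Type*} {s : Finset ι} {w f : ι → ℝ} {B : ℝ}
    (hw : ∀ i ∈ s, 0 ≤ w i) (hws : ∑ i ∈ s, w i = 1) (hf : ∀ i ∈ s, |f i| ≤ B) :
    |∑ i ∈ s, w i * f i| ≤ B :=
  calc |∑ i ∈ s, w i * f i|
      ≤ ∑ i ∈ s, |w i * f i| := abs_sum_le_sum_abs _ _
    _ ≤ ∑ i ∈ s, w i * B := by
        refine sum_le_sum fun i hi => ?_
        rw [abs_mul, abs_of_nonneg (hw i hi)]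
        exact mul_le_mul_of_nonneg_left (hf i hi) (hw i hi)
    _ = B := by rw [← sum_mul, hws, one_mul]

theorem stmt_5_general {X : Type*} [Fintype X] [Nonempty X] (π π₀ rt : X → ℝ) (b : ℝ)
    (hπ : ∀ x, 0 < π x)
    (hπ₀ : ∀ x, 0 < π₀ x) (hπ₀s : ∑ x, π₀ x = 1)
    (hb : ∀ x, |rt x| ≤ b) :
    |(∑ x, π x * rt x) - ∑ x, π₀ x * rt x * Real.log (π x)| ≤
      |∑ x, π₀ x * rt x * (1 - Real.log (π₀ x))| +
        b * (Finset.univ.sup' Finset.univ_nonempty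
          (fun x => π x / π₀ x - 1 - Real.log (π x / π₀ x))) := by
  set g : X → ℝ := fun x => π x / π₀ x - 1 - Real.log (π x / π₀ x)
  have hg : ∀ x, 0 ≤ g x := fun x => Real.sub_one_sub_log_nonneg (div_pos (hπ x) (hπ₀ x))
  have hsplit : (∑ x, π x * rt x) - ∑ x, π₀ x * rt x * Real.log (π x) =
      (∑ x, π₀ x * rt x * (1 - Real.log (π₀ x))) + ∑ x, π₀ x * (rt x * g x) := by
    rw [← sum_sub_distrib, ← sum_add_distrib]
    refine sum_congr rfl fun x _ => ?_
    rw [Real.mul_sub_mul_mul_log_eq (hπ x) (hπ₀ x), mul_assoc (π₀ x) (rt x) (g x)]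
  have hbound : |∑ x, π₀ x * (rt x * g x)| ≤ b * univ.sup' univ_nonempty g := by
    refine abs_sum_mul_le_of_sum_eq_one (fun x _ => (hπ₀ x).le) hπ₀s fun x _ => ?_
    rw [abs_mul, abs_of_nonneg (hg x)]
    exact mul_le_mul (hb x) (le_sup' g (mem_univ x)) (hg x) ((abs_nonneg _).trans (hb x))
  rw [hsplit]
  exact (abs_add_le _ _).trans (add_le_add_right hbound _)

theorem stmt_5 {X : Type*} [Fintype X] [Nonempty X] (π π₀ rt : X → ℝ) (b : ℝ)
    (hπ : ∀ x, 0 < π x) (hπs : ∑ x, π x = 1)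
    (hπ₀ : ∀ x, 0 < π₀ x) (hπ₀s : ∑ x, π₀ x = 1)
    (hb : ∀ x, |rt x| ≤ b) :
    |(∑ x, π x * rt x) - ∑ x, π₀ x * rt x * Real.log (π x)| ≤
      |∑ x, π₀ x * rt x * (1 - Real.log (π₀ x))| +
        b * (Finset.univ.sup' Finset.univ_nonempty
          (fun x => π x / π₀ x - 1 - Real.log (π x / π₀ x))) :=
  stmt_5_general π π₀ rt b hπ hπ₀ hπ₀s hb
end

section
/- Let X be a finite set, π and π₀ probability mass functions on X with full support, and r : X → ℝ with 0 ≤ r(x) ≤ R for all x. Then ∑_x π(x) r(x) - ∑_x π₀(x) r(x)(1 + log(π(x)/π₀(x))) ≤ R · ∑_x π₀(x) (π(x)/π₀(x) - 1 - log(π(x)/π₀(x))) = R · D_KL(π₀ ‖ π). -/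
theorem stmt_9 {X : Type*} [Fintype X] (π π₀ r : X → ℝ) (R : ℝ)
    (hπ : ∀ x, 0 < π x) (hπs : ∑ x, π x = 1)
    (hπ₀ : ∀ x, 0 < π₀ x) (hπ₀s : ∑ x, π₀ x = 1)
    (hr : ∀ x, 0 ≤ r x ∧ r x ≤ R) :
    (∑ x, π x * r x) - (∑ x, π₀ x * r x * (1 + Real.log (π x / π₀ x))) ≤
        R * ∑ x, π₀ x * (π x / π₀ x - 1 - Real.log (π x / π₀ x)) ∧
      R * (∑ x, π₀ x * (π x / π₀ x - 1 - Real.log (π x / π₀ x))) =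
        R * ∑ x, π₀ x * Real.log (π₀ x / π x) := by
  constructor
  · rw [← Finset.sum_sub_distrib, Finset.mul_sum]
    apply Finset.sum_le_sum
    intro x _
    have ht : 0 < π x / π₀ x := div_pos (hπ x) (hπ₀ x)
    have hlog : Real.log (π x / π₀ x) ≤ π x / π₀ x - 1 := Real.log_le_sub_one_of_pos ht
    have h1 : π x * r x - π₀ x * r x * (1 + Real.log (π x / π₀ x)) =
        r x * (π₀ x * (π x / π₀ x - 1 - Real.log (π x / π₀ x))) := by
      field_simp [(hπ₀ x).ne']
      ring
    rw [h1]
    exact mul_le_mul_of_nonneg_right (hr x).2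
      (mul_nonneg (hπ₀ x).le (by linarith))
  · congr 1
    have key : ∀ x, π₀ x * (π x / π₀ x - 1 - Real.log (π x / π₀ x)) =
        π x - π₀ x + π₀ x * Real.log (π₀ x / π x) := by
      intro x
      rw [Real.log_div (hπ x).ne' (hπ₀ x).ne', Real.log_div (hπ₀ x).ne' (hπ x).ne']
      field_simp [(hπ₀ x).ne']
      ring
    simp_rw [key, Finset.sum_add_distrib, Finset.sum_sub_distrib, hπs, hπ₀s]
    ring
end
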